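/- arXiv:1507.04516 — 7 statements merged into one kernel-verified Lean document; each statement's English description precedes it below -/
import Mathlib

section
/- Let f : X → Y be a mapping between normed spaces and x̄ ∈ X. If f admits a first-order ε-approximation h ∈ Hom(X, Y) at x̄ with α₀(h) > ε, then f is strongly metrically subregular at x̄ and subreg f(x̄) ≤ 1 / (α₀(h) − ε). -/
open Filter Topology Metric Set ENNReal

/-- Strong metric subregularity of a single-valued map between normed spaces at `xb`. -/
def IsStronglyMetricallySubregularMap {X Y : Type*}
    [NormedAddCommGroup X] [NormedAddCommGroup Y] (f : X → Y) (xb : X) : Prop :=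
  ∃ κ : ℝ, 0 ≤ κ ∧ ∃ r : ℝ, 0 < r ∧ ∀ x ∈ Metric.closedBall xb r,
    ‖x - xb‖ ≤ κ * ‖f x - f xb‖

/-- The modulus of subregularity of a single-valued map. -/
noncomputable def subregModMap {X Y : Type*}
    [NormedAddCommGroup X] [NormedAddCommGroup Y] (f : X → Y) (xb : X) : ℝ :=
  sInf {κ : ℝ | 0 ≤ κ ∧ ∃ r : ℝ, 0 < r ∧ ∀ x ∈ Metric.closedBall xb r,
    ‖x - xb‖ ≤ κ * ‖f x - f xb‖}

/-- `h` belongs to `Hom(X, Y)`: it is positively homogeneous and continuous at `0`. -/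
def MemHom {X Y : Type*} [NormedAddCommGroup X] [NormedSpace ℝ X]
    [NormedAddCommGroup Y] [NormedSpace ℝ Y] (h : X → Y) : Prop :=
  h 0 = 0 ∧ (∀ t : ℝ, 0 < t → ∀ x : X, h (t • x) = t • h x) ∧ ContinuousAt h 0

/-- `α₀(h) = inf_{‖u‖=1} ‖h u‖` (as an extended nonnegative real; `+∞` if the unit
sphere is empty). -/
noncomputable def alpha0 {X Y : Type*}
    [NormedAddCommGroup X] [NormedAddCommGroup Y] (h : X → Y) : ℝ≥0∞ :=
  ⨅ u : {u : X // ‖u‖ = 1}, ENNReal.ofReal ‖h u.1‖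

/-- `h` is a first-order `ε`-approximation of `f` at `xb`:
`clm (f − h(· − xb))(xb) < ε`. -/
def IsFirstOrderApprox {X Y : Type*} [NormedAddCommGroup X] [NormedAddCommGroup Y]
    (f : X → Y) (xb : X) (h : X → Y) (ε : ℝ) : Prop :=
  ∃ κ : ℝ, 0 ≤ κ ∧ κ < ε ∧ ∃ r : ℝ, 0 < r ∧ ∀ x ∈ Metric.closedBall xb r,
    ‖(f x - h (x - xb)) - (f xb - h (xb - xb))‖ ≤ κ * ‖x - xb‖

/-- If `f` is first-order `ε`-approximated at `xb` by
`h ∈ Hom(X, Y)` with `α₀(h) > ε`, then `f` is strongly metrically subregular at `xb`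
and `subreg f(xb) ≤ 1/(α₀(h) − ε)`. -/
theorem strong_subreg_of_first_order_approx {X Y : Type*}
    [NormedAddCommGroup X] [NormedSpace ℝ X] [NormedAddCommGroup Y] [NormedSpace ℝ Y]
    (f : X → Y) (xb : X) (h : X → Y) (ε : ℝ) (hε : 0 < ε)
    (hHom : MemHom h) (happrox : IsFirstOrderApprox f xb h ε)
    (hα : ENNReal.ofReal ε < alpha0 h) :
    IsStronglyMetricallySubregularMap f xb ∧
    ENNReal.ofReal (subregModMap f xb) ≤ 1 / (alpha0 h - ENNReal.ofReal ε) := by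
  obtain ⟨κ, hκ0, hκε, r, hr, happ⟩ := happrox
  have h00 : h (xb - xb) = 0 := by simp [hHom.1]
  have hbdd : BddBelow {κ : ℝ | 0 ≤ κ ∧ ∃ r : ℝ, 0 < r ∧ ∀ x ∈ Metric.closedBall xb r,
      ‖x - xb‖ ≤ κ * ‖f x - f xb‖} := ⟨0, fun a ha => ha.1⟩
  by_cases hX : ∃ u : X, ‖u‖ = 1
  · -- nontrivial case
    obtain ⟨u₀, hu₀⟩ := hX
    have hne : alpha0 h ≠ ⊤ := by
      refine ne_top_of_le_ne_top ?_ (iInf_le _ ⟨u₀, hu₀⟩)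
      exact ENNReal.ofReal_ne_top
    set α : ℝ := (alpha0 h).toReal with hαdef
    have hofα : ENNReal.ofReal α = alpha0 h := by
      rw [hαdef, ENNReal.ofReal_toReal hne]
    have hεα : ε < α := by
      by_contra hc
      push_neg at hc
      exact absurd hα (not_lt.2 (hofα ▸ ENNReal.ofReal_le_ofReal hc))
    have hαle : ∀ u : X, ‖u‖ = 1 → α ≤ ‖h u‖ := by
      intro u hu
      have := iInf_le (fun u : {u : X // ‖u‖ = 1} => ENNReal.ofReal ‖h u.1‖) ⟨u, hu⟩
      have := ENNReal.toReal_mono ENNReal.ofReal_ne_top this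
      rwa [ENNReal.toReal_ofReal (norm_nonneg _)] at this
    have hακ : 0 < α - κ := by linarith
    have hαε : 0 < α - ε := by linarith
    have key : ∀ x ∈ Metric.closedBall xb r, ‖x - xb‖ ≤ (α - κ)⁻¹ * ‖f x - f xb‖ := by
      intro x hx
      by_cases hxx : x = xb
      · simp only [hxx, sub_self, norm_zero]
        positivity
      · set t : ℝ := ‖x - xb‖ with htdef
        have ht : 0 < t := norm_pos_iff.2 (sub_ne_zero.2 hxx)
        have hu : ‖t⁻¹ • (x - xb)‖ = 1 := by
          rw [norm_smul, norm_inv, Real.norm_eq_abs, abs_of_pos ht, ← htdef,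
            inv_mul_cancel₀ ht.ne']
        have hhom : h (x - xb) = t • h (t⁻¹ • (x - xb)) := by
          rw [← hHom.2.1 t ht, smul_inv_smul₀ ht.ne']
        have hnorm : t * α ≤ ‖h (x - xb)‖ := by
          rw [hhom, norm_smul, Real.norm_eq_abs, abs_of_pos ht]
          exact mul_le_mul_of_nonneg_left (hαle _ hu) ht.le
        have happx := happ x hx
        rw [h00] at happx
        have h1 : ‖h (x - xb)‖ - ‖f x - f xb‖ ≤ κ * t := by
          have hle := norm_sub_norm_le (h (x - xb)) (f x - f xb)
          have heq : ‖h (x - xb) - (f x - f xb)‖ = ‖f x - h (x - xb) - (f xb - 0)‖ := by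
            rw [← norm_neg (h (x - xb) - (f x - f xb))]
            congr 1
            abel
          rw [heq] at hle
          exact hle.trans happx
        have h2 : t * (α - κ) ≤ ‖f x - f xb‖ := by nlinarith
        rw [inv_mul_eq_div, le_div_iff₀ hακ]
        exact h2
    have hmem : (α - κ)⁻¹ ∈ {κ : ℝ | 0 ≤ κ ∧ ∃ r : ℝ, 0 < r ∧
        ∀ x ∈ Metric.closedBall xb r, ‖x - xb‖ ≤ κ * ‖f x - f xb‖} :=
      ⟨inv_nonneg.2 hακ.le, r, hr, key⟩
    constructor
    · exact ⟨(α - κ)⁻¹, hmem.1, r, hr, key⟩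
    · have hs : subregModMap f xb ≤ (α - κ)⁻¹ := csInf_le hbdd hmem
      have hs2 : (α - κ)⁻¹ ≤ (α - ε)⁻¹ := by
        apply inv_anti₀ hαε
        linarith
      calc ENNReal.ofReal (subregModMap f xb) ≤ ENNReal.ofReal ((α - ε)⁻¹) :=
            ENNReal.ofReal_le_ofReal (hs.trans hs2)
        _ = (ENNReal.ofReal (α - ε))⁻¹ := ENNReal.ofReal_inv_of_pos hαε
        _ = 1 / (alpha0 h - ENNReal.ofReal ε) := by
            rw [one_div, ENNReal.ofReal_sub _ hε.le, hofα]
  · -- trivial space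
    haveI : IsEmpty {u : X // ‖u‖ = 1} := ⟨fun u => hX ⟨u.1, u.2⟩⟩
    have triv : ∀ x : X, x = xb := by
      intro x
      by_contra hxx
      have ht : (0:ℝ) < ‖x - xb‖ := norm_pos_iff.2 (sub_ne_zero.2 hxx)
      exact hX ⟨‖x - xb‖⁻¹ • (x - xb), by
        rw [norm_smul, norm_inv, Real.norm_eq_abs, abs_of_pos ht, inv_mul_cancel₀ ht.ne']⟩
    have hmem0 : (0:ℝ) ∈ {κ : ℝ | 0 ≤ κ ∧ ∃ r : ℝ, 0 < r ∧
        ∀ x ∈ Metric.closedBall xb r, ‖x - xb‖ ≤ κ * ‖f x - f xb‖} := by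
      refine ⟨le_refl 0, 1, one_pos, fun x _ => ?_⟩
      simp [triv x]
    constructor
    · exact ⟨0, le_refl 0, 1, one_pos, fun x _ => by simp [triv x]⟩
    · have : subregModMap f xb = 0 :=
        le_antisymm (csInf_le hbdd hmem0) (le_csInf ⟨0, hmem0⟩ fun a ha => ha.1)
      simp [this]
end

section
/- Let f : X → Y be a mapping between normed spaces that is strongly metrically subregular at x̄ ∈ X, say with κ > 0 and r > 0 such that ‖x − x̄‖ ≤ κ ‖f(x) − f(x̄)‖ for all x ∈ B(x̄, r). Then for every ε > 0 with ε κ < 1 and every h ∈ Hom(X, Y) that is a first-order ε-approximation of f at x̄, one has α₀(h) ≥ 1/κ − ε > 0; in particular, h is strongly metrically subregular at 0. -/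
open Filter Topology Metric Set ENNReal

/-- If `f` is strongly metrically subregular at `xb`, say with
constants `κ > 0`, `r > 0`, then for every `ε > 0` with `ε κ < 1` and every
`h ∈ Hom(X, Y)` that first-order `ε`-approximates `f` at `xb`, one has
`α₀(h) ≥ 1/κ − ε > 0`; in particular `h` is strongly metrically subregular at `0`. -/
theorem alpha0_pos_of_strong_subreg {X Y : Type*}
    [NormedAddCommGroup X] [NormedSpace ℝ X] [NormedAddCommGroup Y] [NormedSpace ℝ Y]
    (f : X → Y) (xb : X) (κ r : ℝ) (hκ : 0 < κ) (hr : 0 < r)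
    (hsub : ∀ x ∈ Metric.closedBall xb r, ‖x - xb‖ ≤ κ * ‖f x - f xb‖)
    (ε : ℝ) (hε : 0 < ε) (hεκ : ε * κ < 1)
    (h : X → Y) (hHom : MemHom h) (happrox : IsFirstOrderApprox f xb h ε) :
    ENNReal.ofReal (1 / κ - ε) ≤ alpha0 h ∧ 0 < 1 / κ - ε ∧
    IsStronglyMetricallySubregularMap h 0 := by
  obtain ⟨h0, hpos, _⟩ := hHom
  obtain ⟨κ', hκ'0, hκ'ε, r', hr', happ⟩ := happrox
  have hpos1 : 0 < 1 / κ - ε := by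
    have : ε < 1 / κ := by
      rw [lt_div_iff₀ hκ]
      linarith
    linarith
  -- key pointwise bound on the unit sphere
  have key : ∀ u : X, ‖u‖ = 1 → 1 / κ - ε ≤ ‖h u‖ := by
    intro u hu
    set t : ℝ := min r r' with ht
    have ht0 : 0 < t := lt_min hr hr'
    set x : X := xb + t • u with hx
    have hxd : x - xb = t • u := by simp [hx]
    have hnorm : ‖x - xb‖ = t := by
      rw [hxd, norm_smul, hu, Real.norm_eq_abs, abs_of_pos ht0, mul_one]
    have hmemr : x ∈ Metric.closedBall xb r := by
      rw [Metric.mem_closedBall, dist_eq_norm, hnorm]; exact min_le_left _ _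
    have hmemr' : x ∈ Metric.closedBall xb r' := by
      rw [Metric.mem_closedBall, dist_eq_norm, hnorm]; exact min_le_right _ _
    have h1 := hsub x hmemr
    have h2 := happ x hmemr'
    rw [hnorm] at h1 h2
    rw [hxd, hpos t ht0 u] at h2
    have hself : xb - xb = 0 := sub_self xb
    rw [hself, h0, sub_zero] at h2
    have h3 : ‖f x - f xb‖ ≤ ‖t • h u‖ + κ' * t := by
      have hdecomp : f x - f xb = (f x - t • h u - f xb) + t • h u := by abel
      calc ‖f x - f xb‖ = ‖(f x - t • h u - f xb) + t • h u‖ := by rw [← hdecomp]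
        _ ≤ ‖f x - t • h u - f xb‖ + ‖t • h u‖ := norm_add_le _ _
        _ ≤ ‖t • h u‖ + κ' * t := by linarith
    have hts : ‖t • h u‖ = t * ‖h u‖ := by
      rw [norm_smul, Real.norm_eq_abs, abs_of_pos ht0]
    rw [hts] at h3
    have h4 : t ≤ κ * (t * ‖h u‖ + κ' * t) := le_trans h1 (by nlinarith)
    have h5 : 1 ≤ κ * (‖h u‖ + κ') := by nlinarith
    have h6 : 1 / κ ≤ ‖h u‖ + κ' := by
      rw [div_le_iff₀ hκ]; nlinarith
    linarith
  refine ⟨?_, hpos1, ?_⟩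
  · refine le_iInf fun u => ENNReal.ofReal_le_ofReal (key u.1 u.2)
  · refine ⟨(1 / κ - ε)⁻¹, le_of_lt (inv_pos.mpr hpos1), 1, one_pos, fun x _ => ?_⟩
    rcases eq_or_ne x 0 with rfl | hx0
    · simp
    · have hxn : 0 < ‖x‖ := norm_pos_iff.mpr hx0
      have hu : ‖‖x‖⁻¹ • x‖ = 1 := by
        rw [norm_smul, Real.norm_eq_abs, abs_of_pos (inv_pos.mpr hxn)]
        field_simp
      have hk := key _ hu
      have hhx : h x = ‖x‖ • h (‖x‖⁻¹ • x) := by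
        rw [← hpos ‖x‖ hxn (‖x‖⁻¹ • x), smul_smul, mul_inv_cancel₀ (ne_of_gt hxn), one_smul]
      have : ‖h x - h 0‖ = ‖x‖ * ‖h (‖x‖⁻¹ • x)‖ := by
        rw [h0, sub_zero, hhx, norm_smul, Real.norm_eq_abs, abs_of_pos hxn]
      rw [sub_zero, this]
      rw [inv_mul_eq_div, le_div_iff₀ hpos1]
      nlinarith [norm_nonneg x]
end

section
/- Let f : X → Y be a mapping between normed spaces that is Fréchet differentiable at x̄ ∈ X with derivative Df(x̄). Then f is strongly metrically subregular at x̄ if and only if α(Df(x̄)) > 0, and in that case subreg f(x̄) ≤ 1/α(Df(x̄)). In particular, if X and Y are finite-dimensional, f is strongly metrically subregular at x̄ if and only if ker Df(x̄) = {0}. -/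
/-!
Write `f x - f xb = Λ (x - xb) + o(‖x - xb‖)`. If `c * ‖h‖ ≤ ‖Λ h‖` for all `h` with `c > 0`,
then near `xb` we get `(c - ε) * ‖x - xb‖ ≤ ‖f x - f xb‖` for every `ε > 0`, so every `κ > 1/c`
is a subregularity modulus. Conversely, applying a subregularity estimate with modulus `κ` at
`xb + t • h` and dividing by `|t|` bounds `‖h‖` by `κ` times the norm of a difference quotient;
letting `t → 0` gives `‖h‖ ≤ κ * ‖Λ h‖`. By homogeneity `α(Λ)` is the supremum of the admissible
`c`, and in finite dimensions an injective linear map is antilipschitz.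
-/

open Filter Topology Metric Set ENNReal

/-- The injectivity constant `α(f) = inf_{‖u‖=1} ‖f u‖` (as an extended nonnegative
real; `+∞` if the unit sphere is empty). -/
noncomputable def injConst {X Y : Type*}
    [NormedAddCommGroup X] [NormedAddCommGroup Y] (f : X → Y) : ℝ≥0∞ :=
  ⨅ u : {u : X // ‖u‖ = 1}, ENNReal.ofReal ‖f u.1‖

theorem ofReal_le_injConst_iff {X Y : Type*} [NormedAddCommGroup X] [NormedAddCommGroup Y]
    {g : X → Y} {c : ℝ} :
    ENNReal.ofReal c ≤ injConst g ↔ ∀ u : X, ‖u‖ = 1 → c ≤ ‖g u‖ := by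
  simp only [injConst, le_iInf_iff, ENNReal.ofReal_le_ofReal_iff (norm_nonneg _), Subtype.forall]

section InjConst

variable {X Y : Type*} [NormedAddCommGroup X] [NormedSpace ℝ X]
  [NormedAddCommGroup Y] [NormedSpace ℝ Y]

theorem mul_norm_le_norm_apply_iff (Λ : X →L[ℝ] Y) {c : ℝ} :
    (∀ x, c * ‖x‖ ≤ ‖Λ x‖) ↔ ∀ u : X, ‖u‖ = 1 → c ≤ ‖Λ u‖ := by
  refine ⟨fun h u hu => by simpa [hu] using h u, fun h x => ?_⟩
  rcases eq_or_ne x 0 with rfl | hx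
  · simp
  have hx' : 0 < ‖x‖ := norm_pos_iff.mpr hx
  have hu := h (‖x‖⁻¹ • x) (by rw [norm_smul, norm_inv, norm_norm, inv_mul_cancel₀ hx'.ne'])
  rw [map_smul, norm_smul, norm_inv, norm_norm, ← div_eq_inv_mul, le_div_iff₀ hx'] at hu
  exact hu

theorem ofReal_le_injConst_iff_mul_norm_le (Λ : X →L[ℝ] Y) {c : ℝ} :
    ENNReal.ofReal c ≤ injConst Λ ↔ ∀ x, c * ‖x‖ ≤ ‖Λ x‖ :=
  ofReal_le_injConst_iff.trans (mul_norm_le_norm_apply_iff Λ).symm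

theorem zero_lt_injConst_iff (Λ : X →L[ℝ] Y) :
    0 < injConst Λ ↔ ∃ c > 0, ∀ x, c * ‖x‖ ≤ ‖Λ x‖ := by
  constructor
  · intro h
    obtain ⟨c, -, hc0, hc⟩ := ENNReal.lt_iff_exists_real_btwn.mp h
    exact ⟨c, ENNReal.ofReal_pos.mp hc0, (ofReal_le_injConst_iff_mul_norm_le Λ).mp hc.le⟩
  · rintro ⟨c, hc0, hc⟩
    exact (ENNReal.ofReal_pos.mpr hc0).trans_le ((ofReal_le_injConst_iff_mul_norm_le Λ).mpr hc)

theorem zero_lt_injConst_of_bound (Λ : X →L[ℝ] Y) {K : ℝ} (hK : ∀ x, ‖x‖ ≤ K * ‖Λ x‖) :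
    0 < injConst Λ := by
  have hK1 : 0 < max K 1 := lt_max_of_lt_right one_pos
  refine (zero_lt_injConst_iff Λ).mpr ⟨(max K 1)⁻¹, inv_pos.mpr hK1, fun x => ?_⟩
  rw [inv_mul_le_iff₀ hK1]
  exact (hK x).trans (mul_le_mul_of_nonneg_right (le_max_left K 1) (norm_nonneg _))

theorem zero_lt_injConst_iff_ker_eq_bot [FiniteDimensional ℝ X] (Λ : X →L[ℝ] Y) :
    0 < injConst Λ ↔ LinearMap.ker (Λ : X →ₗ[ℝ] Y) = ⊥ := by
  constructor
  · intro h
    obtain ⟨c, hc0, hc⟩ := (zero_lt_injConst_iff Λ).mp h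
    refine LinearMap.ker_eq_bot'.mpr fun x hx => norm_le_zero_iff.mp ?_
    have hcx := hc x
    rw [show Λ x = 0 from hx, norm_zero] at hcx
    exact nonpos_of_mul_nonpos_right hcx hc0
  · intro hker
    obtain ⟨K, -, hK⟩ := (Λ : X →ₗ[ℝ] Y).exists_antilipschitzWith hker
    exact zero_lt_injConst_of_bound Λ (Λ.bound_of_antilipschitz hK)

end InjConst

section Subregularity

variable {X Y : Type*} [NormedAddCommGroup X] [NormedAddCommGroup Y]

def subregConsts (f : X → Y) (xb : X) : Set ℝ :=
  {κ | 0 ≤ κ ∧ ∀ᶠ x in 𝓝 xb, ‖x - xb‖ ≤ κ * ‖f x - f xb‖}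

theorem subregModMap_eq_sInf (f : X → Y) (xb : X) :
    subregModMap f xb = sInf (subregConsts f xb) := by
  simp only [subregModMap, subregConsts, nhds_basis_closedBall.eventually_iff]

theorem isStronglyMetricallySubregularMap_iff_nonempty (f : X → Y) (xb : X) :
    IsStronglyMetricallySubregularMap f xb ↔ (subregConsts f xb).Nonempty := by
  simp only [IsStronglyMetricallySubregularMap, subregConsts,
    nhds_basis_closedBall.eventually_iff, Set.Nonempty, Set.mem_ofPred_eq]

variable [NormedSpace ℝ X] [NormedSpace ℝ Y] {f : X → Y} {xb : X} {Λ : X →L[ℝ] Y}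

theorem HasFDerivAt.norm_le_mul_norm_apply {κ : ℝ} (hf : HasFDerivAt f Λ xb)
    (hκ : ∀ᶠ x in 𝓝 xb, ‖x - xb‖ ≤ κ * ‖f x - f xb‖) (h : X) : ‖h‖ ≤ κ * ‖Λ h‖ := by
  have hline : HasDerivAt (fun t : ℝ => xb + t • h) h 0 := by
    simpa using ((hasDerivAt_id (0 : ℝ)).smul_const h).const_add xb
  have hslope : Tendsto (slope (fun t : ℝ => f (xb + t • h)) 0) (𝓝[≠] 0) (𝓝 (Λ h)) :=
    hasDerivAt_iff_tendsto_slope.mp (hf.comp_hasDerivAt_of_eq 0 hline (by simp))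
  have hnear : ∀ᶠ t in 𝓝[≠] (0 : ℝ), ‖h‖ ≤ κ * ‖slope (fun t : ℝ => f (xb + t • h)) 0 t‖ := by
    have hto : Tendsto (fun t : ℝ => xb + t • h) (𝓝[≠] 0) (𝓝 xb) := by
      simpa using hline.continuousAt.tendsto.mono_left nhdsWithin_le_nhds
    filter_upwards [hto.eventually hκ, self_mem_nhdsWithin] with t ht ht0
    have ht0 : 0 < |t| := abs_pos.mpr ht0
    rw [add_sub_cancel_left, norm_smul, Real.norm_eq_abs] at ht
    rw [slope_def_module, sub_zero, zero_smul, add_zero, norm_smul, norm_inv, Real.norm_eq_abs,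
      mul_left_comm, le_inv_mul_iff₀ ht0]
    exact ht
  exact ge_of_tendsto ((continuous_const.mul continuous_norm).tendsto _ |>.comp hslope) hnear

theorem HasFDerivAt.mem_subregConsts {c κ : ℝ} (hf : HasFDerivAt f Λ xb) (hc0 : 0 < c)
    (hc : ∀ x, c * ‖x‖ ≤ ‖Λ x‖) (hκ : c⁻¹ < κ) : κ ∈ subregConsts f xb := by
  have hκ0 : 0 < κ := (inv_pos.mpr hc0).trans hκ
  have hε : 0 < c - κ⁻¹ := sub_pos.mpr (inv_lt_of_inv_lt₀ hc0 hκ)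
  refine ⟨hκ0.le, ?_⟩
  filter_upwards [hf.isLittleO.bound hε] with x hx
  have hΛ : c * ‖x - xb‖ ≤ ‖f x - f xb‖ + (c - κ⁻¹) * ‖x - xb‖ :=
    (hc _).trans ((norm_le_norm_add_norm_sub _ _).trans (by gcongr))
  rw [← inv_mul_le_iff₀ hκ0]
  linarith

theorem HasFDerivAt.subregModMap_le_inv {c : ℝ} (hf : HasFDerivAt f Λ xb) (hc0 : 0 < c)
    (hc : ∀ x, c * ‖x‖ ≤ ‖Λ x‖) : subregModMap f xb ≤ c⁻¹ := by
  rw [subregModMap_eq_sInf]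
  exact le_of_forall_gt_imp_ge_of_dense fun κ hκ =>
    csInf_le ⟨0, fun _ h => h.1⟩ (hf.mem_subregConsts hc0 hc hκ)

theorem HasFDerivAt.ofReal_subregModMap_le_inv_injConst (hf : HasFDerivAt f Λ xb) :
    ENNReal.ofReal (subregModMap f xb) ≤ (injConst Λ)⁻¹ := by
  refine ENNReal.le_inv_iff_le_inv.mpr (ENNReal.le_of_forall_nnreal_lt fun r hr => ?_)
  rcases eq_zero_or_pos r with rfl | hr0
  · simp
  have hr0 : (0 : ℝ) < r := NNReal.coe_pos.mpr hr0
  have hc := (ofReal_le_injConst_iff_mul_norm_le Λ (c := r)).mp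
    (by rw [ENNReal.ofReal_coe_nnreal]; exact hr.le)
  refine ENNReal.le_inv_iff_le_inv.mpr ?_
  calc ENNReal.ofReal (subregModMap f xb) ≤ ENNReal.ofReal (r : ℝ)⁻¹ :=
        ENNReal.ofReal_le_ofReal (hf.subregModMap_le_inv hr0 hc)
    _ = (r : ℝ≥0∞)⁻¹ := by rw [ENNReal.ofReal_inv_of_pos hr0, ENNReal.ofReal_coe_nnreal]

end Subregularity

/-- A Fréchet differentiable map `f` is strongly metrically
subregular at `xb` iff `α(Df(xb)) > 0`, in which case
`subreg f(xb) ≤ 1/α(Df(xb))`; in finite dimensions, `f` is strongly metrically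
subregular at `xb` iff `ker Df(xb) = {0}`. -/
theorem strong_subreg_of_differentiable {X Y : Type*}
    [NormedAddCommGroup X] [NormedSpace ℝ X] [NormedAddCommGroup Y] [NormedSpace ℝ Y]
    (f : X → Y) (xb : X) (Λ : X →L[ℝ] Y) (hf : HasFDerivAt f Λ xb) :
    (IsStronglyMetricallySubregularMap f xb ↔ 0 < injConst (fun u => Λ u)) ∧
    (0 < injConst (fun u => Λ u) →
      ENNReal.ofReal (subregModMap f xb) ≤ 1 / injConst (fun u => Λ u)) ∧
    (FiniteDimensional ℝ X → FiniteDimensional ℝ Y →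
      (IsStronglyMetricallySubregularMap f xb ↔ LinearMap.ker (Λ : X →ₗ[ℝ] Y) = ⊥)) := by
  have hiff : IsStronglyMetricallySubregularMap f xb ↔ 0 < injConst Λ := by
    rw [isStronglyMetricallySubregularMap_iff_nonempty]
    constructor
    · rintro ⟨κ, -, hκ⟩
      exact zero_lt_injConst_of_bound Λ (hf.norm_le_mul_norm_apply hκ)
    · intro h
      obtain ⟨c, hc0, hc⟩ := (zero_lt_injConst_iff Λ).mp h
      exact ⟨2 * c⁻¹, hf.mem_subregConsts hc0 hc (by linarith [inv_pos.mpr hc0])⟩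
  refine ⟨hiff, fun _ => ?_, fun _ _ => hiff.trans (zero_lt_injConst_iff_ker_eq_bot Λ)⟩
  rw [one_div]
  exact hf.ofReal_subregModMap_le_inv_injConst
end

section
/- Let f : X → Y be a mapping between normed spaces that admits at x̄ an outer ε-prederivative Φ : X ⇉ Y with α(Φ) > ε. Then f is strongly metrically subregular at x̄ and subreg f(x̄) ≤ 1/(α(Φ) − ε). If, in particular, Φ is an outer prederivative of f at x̄ with α(Φ) > 0, then the stricter estimate subreg f(x̄) ≤ 1/α(Φ) holds. -/
open Filter Topology Metric Set ENNReal Pointwise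

/-- The injectivity constant `α(Φ) = inf_{‖u‖=1} dist(0, Φ u)` of a set-valued map. -/
noncomputable def injConstSV {X Y : Type*}
    [NormedAddCommGroup X] [NormedAddCommGroup Y] (Φ : X → Set Y) : ℝ≥0∞ :=
  ⨅ u : {u : X // ‖u‖ = 1}, EMetric.infEdist (0 : Y) (Φ u.1)

/-- `Φ` is an outer `ε`-prederivative of `f` at `xb`: there are `δ > 0` and a function
`r : δ·B_X → [0, ε]` with `f(xb + v) − f(xb) ∈ Φ(v) + r(v)‖v‖·B_Y` for all `‖v‖ ≤ δ`. -/
def IsOuterEpsPrederivative {X Y : Type*}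
    [NormedAddCommGroup X] [NormedAddCommGroup Y]
    (f : X → Y) (xb : X) (Φ : X → Set Y) (ε : ℝ) : Prop :=
  ∃ δ : ℝ, 0 < δ ∧ ∃ r : X → ℝ,
    (∀ v ∈ Metric.closedBall (0 : X) δ, r v ∈ Set.Icc 0 ε) ∧
    ∀ v ∈ Metric.closedBall (0 : X) δ,
      f (xb + v) - f xb ∈ Φ v + Metric.closedBall (0 : Y) (r v * ‖v‖)

/-- `Φ` is an outer prederivative of `f` at `xb`: as above, with `r(v) → 0` as `v → 0`. -/
def IsOuterPrederivative {X Y : Type*}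
    [NormedAddCommGroup X] [NormedAddCommGroup Y]
    (f : X → Y) (xb : X) (Φ : X → Set Y) : Prop :=
  ∃ δ : ℝ, 0 < δ ∧ ∃ r : X → ℝ,
    (∀ v ∈ Metric.closedBall (0 : X) δ, 0 ≤ r v) ∧
    Filter.Tendsto r (nhds (0 : X)) (nhds (0 : ℝ)) ∧
    ∀ v ∈ Metric.closedBall (0 : X) δ,
      f (xb + v) - f xb ∈ Φ v + Metric.closedBall (0 : Y) (r v * ‖v‖)

/-! Positive homogeneity gives `α(Φ) ‖v‖ ≤ ‖y‖` for every `y ∈ Φ v`. Feeding this into the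
inclusion `f (x̄ + v) - f x̄ ∈ Φ v + ε ‖v‖ B_Y` shows `(c - ε) ‖x - x̄‖ ≤ ‖f x - f x̄‖` near `x̄`
for every real `c ∈ (ε, α(Φ)]`, and letting `c` increase to `α(Φ)` bounds the modulus by
`1 / (α(Φ) - ε)`. An outer prederivative is an outer `η`-prederivative for every `η > 0`, and
letting `η → 0` gives `1 / α(Φ)`. -/

theorem ofReal_le_one_div_sub_of_forall_lt {s ε : ℝ} {α : ℝ≥0∞} (hε : 0 ≤ ε)
    (hα : ENNReal.ofReal ε < α) (h : ∀ c : ℝ, ε < c → ENNReal.ofReal c ≤ α → s ≤ (c - ε)⁻¹) :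
    ENNReal.ofReal s ≤ 1 / (α - ENNReal.ofReal ε) := by
  rcases eq_or_ne α ⊤ with rfl | hα_top
  · suffices s ≤ 0 by simp [ENNReal.ofReal_eq_zero.mpr this]
    refine le_of_forall_pos_le_add fun t ht => ?_
    simpa using h (ε + t⁻¹) (by simpa) (by simp)
  · have hεα : ε < α.toReal := (ENNReal.ofReal_lt_iff_lt_toReal hε hα_top).mp hα
    calc ENNReal.ofReal s ≤ ENNReal.ofReal (α.toReal - ε)⁻¹ :=
          ENNReal.ofReal_le_ofReal (h _ hεα ENNReal.ofReal_toReal_le)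
      _ = 1 / (α - ENNReal.ofReal ε) := by
        rw [ENNReal.ofReal_inv_of_pos (sub_pos.mpr hεα), ENNReal.ofReal_sub _ hε,
          ENNReal.ofReal_toReal hα_top, one_div]

theorem le_one_div_of_forall_le_one_div_sub {a α : ℝ≥0∞} (hα : 0 < α)
    (h : ∀ η : ℝ, 0 < η → ENNReal.ofReal η < α → a ≤ 1 / (α - ENNReal.ofReal η)) :
    a ≤ 1 / α := by
  have hofReal : Tendsto ENNReal.ofReal (𝓝[>] 0) (𝓝 0) := by
    simpa using (ENNReal.tendsto_ofReal tendsto_id).mono_left (nhdsWithin_le_nhds (a := (0 : ℝ)))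
  have hlim : Tendsto (fun η : ℝ => 1 / (α - ENNReal.ofReal η)) (𝓝[>] 0) (𝓝 (1 / α)) := by
    simpa only [one_div, tsub_zero] using
      (ENNReal.Tendsto.sub tendsto_const_nhds hofReal (Or.inr ENNReal.zero_ne_top)).inv
  refine ge_of_tendsto hlim ?_
  filter_upwards [self_mem_nhdsWithin, hofReal.eventually (gt_mem_nhds hα)] with η hη hηα
  exact h η hη hηα

section

variable {X Y : Type*} [NormedAddCommGroup X] [NormedAddCommGroup Y] {Φ : X → Set Y}
  {f : X → Y} {xb : X}

theorem subregModMap_le {κ : ℝ} (hκ : 0 ≤ κ)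
    (h : ∃ ρ > 0, ∀ x ∈ closedBall xb ρ, ‖x - xb‖ ≤ κ * ‖f x - f xb‖) :
    subregModMap f xb ≤ κ :=
  csInf_le ⟨0, fun _ hκ' => hκ'.1⟩ ⟨hκ, h⟩

namespace IsOuterEpsPrederivative

variable {ε : ℝ}

theorem nonneg (h : IsOuterEpsPrederivative f xb Φ ε) : 0 ≤ ε := by
  obtain ⟨δ, hδ, r, hr, -⟩ := h
  obtain ⟨hr0, hrε⟩ := hr 0 (mem_closedBall_self hδ.le)
  exact hr0.trans hrε

theorem exists_mem_add_closedBall (h : IsOuterEpsPrederivative f xb Φ ε) :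
    ∃ δ > 0, ∀ v ∈ closedBall (0 : X) δ,
      f (xb + v) - f xb ∈ Φ v + closedBall 0 (ε * ‖v‖) := by
  obtain ⟨δ, hδ, r, hr, hmem⟩ := h
  refine ⟨δ, hδ, fun v hv => add_subset_add_left (closedBall_subset_closedBall ?_) (hmem v hv)⟩
  exact mul_le_mul_of_nonneg_right (hr v hv).2 (norm_nonneg v)

end IsOuterEpsPrederivative

theorem IsOuterPrederivative.isOuterEpsPrederivative (h : IsOuterPrederivative f xb Φ) {η : ℝ}
    (hη : 0 < η) :
    IsOuterEpsPrederivative f xb Φ η := by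
  obtain ⟨δ, hδ, r, hr0, hr, hmem⟩ := h
  obtain ⟨δ', hδ', hrη⟩ := Metric.nhds_basis_closedBall.eventually_iff.mp
    (hr.eventually (ge_mem_nhds hη))
  have hsub : closedBall (0 : X) (min δ δ') ⊆ closedBall 0 δ :=
    closedBall_subset_closedBall (min_le_left _ _)
  have hsub' : closedBall (0 : X) (min δ δ') ⊆ closedBall 0 δ' :=
    closedBall_subset_closedBall (min_le_right _ _)
  exact ⟨min δ δ', lt_min hδ hδ', r, fun v hv => ⟨hr0 v (hsub hv), hrη (hsub' hv)⟩,
    fun v hv => hmem v (hsub hv)⟩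

variable [NormedSpace ℝ X] [NormedSpace ℝ Y]

theorem injConstSV_mul_enorm_le_enorm
    (hΦh : ∀ t : ℝ, 0 < t → ∀ x : X, Φ (t • x) = t • Φ x) {v : X} {y : Y} (hy : y ∈ Φ v) :
    injConstSV Φ * ‖v‖ₑ ≤ ‖y‖ₑ := by
  rcases eq_or_ne v 0 with rfl | hv
  · simp
  have hnorm : 0 < ‖v‖ := norm_pos_iff.mpr hv
  have hΦv : Φ v = ‖v‖ • Φ (‖v‖⁻¹ • v) := by rw [← hΦh _ hnorm, smul_inv_smul₀ hnorm.ne']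
  obtain ⟨z, hz, rfl⟩ : y ∈ ‖v‖ • Φ (‖v‖⁻¹ • v) := hΦv ▸ hy
  have hz_bound : injConstSV Φ ≤ ‖z‖ₑ :=
    calc injConstSV Φ ≤ Metric.infEDist 0 (Φ (‖v‖⁻¹ • v)) :=
          iInf_le_of_le ⟨_, norm_smul_inv_norm hv⟩ le_rfl
      _ ≤ edist 0 z := Metric.infEDist_le_edist_of_mem hz
      _ = ‖z‖ₑ := by rw [edist_comm, edist_zero_right]
  rw [enorm_smul, enorm_norm, mul_comm]
  gcongr

theorem sub_mul_norm_sub_le_norm_sub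
    (hΦh : ∀ t : ℝ, 0 < t → ∀ x : X, Φ (t • x) = t • Φ x) {c η δ : ℝ}
    (hc : ENNReal.ofReal c ≤ injConstSV Φ) (hη : 0 ≤ η) (hηc : η < c)
    (hmem : ∀ v ∈ closedBall (0 : X) δ, f (xb + v) - f xb ∈ Φ v + closedBall 0 (η * ‖v‖))
    {x : X} (hx : x ∈ closedBall xb δ) :
    (c - η) * ‖x - xb‖ ≤ ‖f x - f xb‖ := by
  obtain ⟨y, hy, b, hb, hfx⟩ := hmem (x - xb) (by rwa [mem_closedBall_zero_iff, ← dist_eq_norm])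
  rw [add_sub_cancel] at hfx
  have hy_bound : c * ‖x - xb‖ ≤ ‖y‖ := by
    have := (mul_le_mul_left hc _).trans (injConstSV_mul_enorm_le_enorm hΦh hy)
    rwa [← ofReal_norm, ← ofReal_norm, ← ENNReal.ofReal_mul (hη.trans hηc.le),
      ENNReal.ofReal_le_ofReal_iff (norm_nonneg _)] at this
  have hb_bound : ‖b‖ ≤ η * ‖x - xb‖ := mem_closedBall_zero_iff.mp hb
  calc (c - η) * ‖x - xb‖ ≤ ‖y‖ - ‖b‖ := by linarith
    _ ≤ ‖f x - f xb‖ := by rw [← hfx]; exact norm_sub_le_norm_add y b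

namespace IsOuterEpsPrederivative

variable {ε : ℝ}

theorem exists_closedBall_norm_sub_le (h : IsOuterEpsPrederivative f xb Φ ε)
    (hΦh : ∀ t : ℝ, 0 < t → ∀ x : X, Φ (t • x) = t • Φ x) {c : ℝ}
    (hc : ENNReal.ofReal c ≤ injConstSV Φ) (hεc : ε < c) :
    ∃ ρ > 0, ∀ x ∈ closedBall xb ρ, ‖x - xb‖ ≤ (c - ε)⁻¹ * ‖f x - f xb‖ := by
  obtain ⟨δ, hδ, hmem⟩ := h.exists_mem_add_closedBall
  refine ⟨δ, hδ, fun x hx => ?_⟩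
  rw [inv_mul_eq_div, le_div_iff₀ (sub_pos.mpr hεc), mul_comm]
  exact sub_mul_norm_sub_le_norm_sub hΦh hc h.nonneg hεc hmem hx

theorem isStronglyMetricallySubregularMap (h : IsOuterEpsPrederivative f xb Φ ε)
    (hΦh : ∀ t : ℝ, 0 < t → ∀ x : X, Φ (t • x) = t • Φ x)
    (hα : ENNReal.ofReal ε < injConstSV Φ) : IsStronglyMetricallySubregularMap f xb := by
  obtain ⟨c, -, hεc, hcα⟩ := ENNReal.lt_iff_exists_real_btwn.mp hα
  have hεc : ε < c := (ENNReal.ofReal_lt_ofReal_iff'.mp hεc).1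
  exact ⟨_, inv_nonneg.mpr (sub_pos.mpr hεc).le, h.exists_closedBall_norm_sub_le hΦh hcα.le hεc⟩

theorem ofReal_subregModMap_le (h : IsOuterEpsPrederivative f xb Φ ε)
    (hΦh : ∀ t : ℝ, 0 < t → ∀ x : X, Φ (t • x) = t • Φ x)
    (hα : ENNReal.ofReal ε < injConstSV Φ) :
    ENNReal.ofReal (subregModMap f xb) ≤ 1 / (injConstSV Φ - ENNReal.ofReal ε) :=
  ofReal_le_one_div_sub_of_forall_lt h.nonneg hα fun _ hεc hc =>
    subregModMap_le (inv_nonneg.mpr (sub_pos.mpr hεc).le)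
      (h.exists_closedBall_norm_sub_le hΦh hc hεc)

end IsOuterEpsPrederivative

theorem IsOuterPrederivative.ofReal_subregModMap_le (h : IsOuterPrederivative f xb Φ)
    (hΦh : ∀ t : ℝ, 0 < t → ∀ x : X, Φ (t • x) = t • Φ x) (hα : 0 < injConstSV Φ) :
    ENNReal.ofReal (subregModMap f xb) ≤ 1 / injConstSV Φ :=
  le_one_div_of_forall_le_one_div_sub hα fun _ hη hηα =>
    (h.isOuterEpsPrederivative hη).ofReal_subregModMap_le hΦh hηα

end

theorem strong_subreg_of_outer_prederivative_general {X Y : Type*}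
    [NormedAddCommGroup X] [NormedSpace ℝ X] [NormedAddCommGroup Y] [NormedSpace ℝ Y]
    (f : X → Y) (xb : X) (Φ : X → Set Y)
    (hΦh : ∀ t : ℝ, 0 < t → ∀ x : X, Φ (t • x) = t • Φ x)
    (ε : ℝ) (hpre : IsOuterEpsPrederivative f xb Φ ε)
    (hα : ENNReal.ofReal ε < injConstSV Φ) :
    IsStronglyMetricallySubregularMap f xb ∧
    ENNReal.ofReal (subregModMap f xb) ≤ 1 / (injConstSV Φ - ENNReal.ofReal ε) ∧
    (IsOuterPrederivative f xb Φ →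
      ENNReal.ofReal (subregModMap f xb) ≤ 1 / injConstSV Φ) :=
  ⟨hpre.isStronglyMetricallySubregularMap hΦh hα, hpre.ofReal_subregModMap_le hΦh hα,
    fun hop => hop.ofReal_subregModMap_le hΦh (zero_le.trans_lt hα)⟩

/-- If `f` admits at `xb` an outer `ε`-prederivative `Φ` (positively
homogeneous) with `α(Φ) > ε`, then `f` is strongly metrically subregular at `xb` with
`subreg f(xb) ≤ 1/(α(Φ) − ε)`; if moreover `Φ` is an outer prederivative of `f` at
`xb`, the stricter estimate `subreg f(xb) ≤ 1/α(Φ)` holds. -/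
theorem strong_subreg_of_outer_prederivative {X Y : Type*}
    [NormedAddCommGroup X] [NormedSpace ℝ X] [NormedAddCommGroup Y] [NormedSpace ℝ Y]
    (f : X → Y) (xb : X) (Φ : X → Set Y) (hΦ0 : (0 : Y) ∈ Φ 0)
    (hΦh : ∀ t : ℝ, 0 < t → ∀ x : X, Φ (t • x) = t • Φ x)
    (ε : ℝ) (hε : 0 < ε) (hpre : IsOuterEpsPrederivative f xb Φ ε)
    (hα : ENNReal.ofReal ε < injConstSV Φ) :
    IsStronglyMetricallySubregularMap f xb ∧
    ENNReal.ofReal (subregModMap f xb) ≤ 1 / (injConstSV Φ - ENNReal.ofReal ε) ∧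
    (IsOuterPrederivative f xb Φ →
      ENNReal.ofReal (subregModMap f xb) ≤ 1 / injConstSV Φ) :=
  strong_subreg_of_outer_prederivative_general f xb Φ hΦh ε hpre hα
end

section
/- Let φ : X → ℝ ∪ {+∞} be a proper convex function on a normed space X and x̄ ∈ dom φ. Then x̄ is a global sharp minimizer of φ (i.e. there exists ζ > 0 with φ(x) ≥ φ(x̄) + ζ‖x − x̄‖ for all x ∈ X, equivalently gr↓φ(x̄) > 0) if and only if 0 belongs to the interior of the convex subdifferential ∂φ(x̄) in the dual space X*. Moreover, gr↓φ(x̄) = sup{ρ > 0 : ρB* ⊆ ∂φ(x̄)}, where B* is the closed unit ball of X*. -/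
open Filter Topology Metric Set

/-!
A functional `p` with `‖p‖ ≤ ρ` satisfies `p (x - xb) ≤ ρ‖x - xb‖`, and conversely a norming
functional of `x - xb` (Hahn–Banach) attains this bound; hence `xb` is a sharp minimizer with
slope `ρ ≥ 0` exactly when the closed dual ball of radius `ρ` lies in `∂φ(xb)`. By convexity the
difference quotients of `φ` along a ray from `xb` are nondecreasing, so a sharp lower bound near
`xb` holds globally; therefore the steepest descent rate is the supremum of the sharp slopes.
-/

/-- The steepest descent rate of an extended-real-valued function `φ` at `xb`:
`liminf_{x → xb, x ≠ xb} (φ x − φ xb)/‖x − xb‖`. -/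
noncomputable def steepestDescentRate {X : Type*} [NormedAddCommGroup X]
    (φ : X → EReal) (xb : X) : EReal :=
  Filter.liminf (fun x => (φ x - φ xb) * ((‖x - xb‖⁻¹ : ℝ) : EReal)) (𝓝[≠] xb)

/-- The convex subdifferential of an extended-real-valued function `φ` at `xb`,
a subset of the continuous dual of `X`. -/
def convexSubdiff {X : Type*} [NormedAddCommGroup X] [NormedSpace ℝ X]
    (φ : X → EReal) (xb : X) : Set (StrongDual ℝ X) :=
  {p | ∀ x : X, φ xb + ((p (x - xb) : ℝ) : EReal) ≤ φ x}

namespace EReal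

lemma coe_le_sub_mul_inv_iff {a : EReal} {r ρ c : ℝ} (hc : 0 < c) :
    (ρ : EReal) ≤ (a - r) * ((c⁻¹ : ℝ) : EReal) ↔ (r : EReal) + ((ρ * c : ℝ) : EReal) ≤ a := by
  rw [coe_inv, ← div_eq_mul_inv, le_div_iff_mul_le (by exact_mod_cast hc) (coe_ne_top c),
    le_sub_iff_add_le (.inl (coe_ne_bot r)) (.inl (coe_ne_top r)), coe_mul, add_comm]

lemma sSup_coe_image_pos {S : Set ℝ} (h : ∃ ρ > 0, ρ ∈ S) :
    sSup ((fun ρ : ℝ => (ρ : EReal)) '' {ρ | 0 < ρ ∧ ρ ∈ S}) =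
      sSup ((fun ρ : ℝ => (ρ : EReal)) '' S) := by
  obtain ⟨ζ, hζ, hζS⟩ := h
  refine le_antisymm (sSup_le_sSup (image_mono fun ρ hρ => hρ.2)) (sSup_le ?_)
  rintro _ ⟨ρ, hρS, rfl⟩
  obtain hρ | hρ := lt_or_ge 0 ρ
  · exact le_sSup ⟨ρ, ⟨hρ, hρS⟩, rfl⟩
  · exact (EReal.coe_le_coe_iff.2 (hρ.trans hζ.le)).trans (le_sSup ⟨ζ, ⟨hζ, hζS⟩, rfl⟩)

end EReal

section SharpMin

variable {X : Type*} [NormedAddCommGroup X] {φ : X → EReal} {xb : X} {r : ℝ}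

def IsSharpMinWith (φ : X → EReal) (xb : X) (ρ : ℝ) : Prop :=
  ∀ x, φ xb + ((ρ * ‖x - xb‖ : ℝ) : EReal) ≤ φ x

/-- Mathlib's `ConvexOn` needs a module as codomain, which `EReal` is not. -/
def ERealConvex [Module ℝ X] (φ : X → EReal) : Prop :=
  ∀ x₁ x₂ : X, ∀ t : ℝ, 0 ≤ t → t ≤ 1 →
    φ (t • x₁ + (1 - t) • x₂) ≤ ((t : ℝ) : EReal) * φ x₁ + ((1 - t : ℝ) : EReal) * φ x₂

lemma le_steepestDescentRate {ρ : ℝ} (hr : φ xb = r)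
    (h : IsSharpMinWith φ xb ρ) : (ρ : EReal) ≤ steepestDescentRate φ xb := by
  refine le_liminf_of_le (by isBoundedDefault) ?_
  filter_upwards [self_mem_nhdsWithin] with x (hx : x ≠ xb)
  rw [hr, EReal.coe_le_sub_mul_inv_iff (norm_pos_iff.2 (sub_ne_zero.2 hx)), ← hr]
  exact h x

lemma sharp_bound_of_sharp_bound_at_convex_combination [Module ℝ X]
    (hconv : ERealConvex φ) (hr : φ xb = r) {x : X} {ρ t : ℝ} (ht₀ : 0 < t) (ht₁ : t ≤ 1)
    (hy : φ xb + ((ρ * (t * ‖x - xb‖) : ℝ) : EReal) ≤ φ (t • x + (1 - t) • xb)) :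
    φ xb + ((ρ * ‖x - xb‖ : ℝ) : EReal) ≤ φ x := by
  have hseg := hy.trans (hconv x xb t ht₀.le ht₁)
  rw [hr] at hseg ⊢
  generalize φ x = a at hseg ⊢
  induction a using EReal.rec with
  | bot =>
    rw [EReal.coe_mul_bot_of_pos ht₀, EReal.bot_add, le_bot_iff] at hseg
    exact absurd hseg (EReal.add_ne_bot_iff.2 ⟨EReal.coe_ne_bot _, EReal.coe_ne_bot _⟩)
  | top => exact le_top
  | coe s =>
    norm_cast at hseg ⊢
    exact le_of_mul_le_mul_left (by linarith) ht₀

lemma IsSharpMinWith.of_eventually [NormedSpace ℝ X]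
    (hconv : ERealConvex φ) (hr : φ xb = r) {ρ : ℝ}
    (h : ∀ᶠ x in 𝓝 xb, φ xb + ((ρ * ‖x - xb‖ : ℝ) : EReal) ≤ φ x) :
    IsSharpMinWith φ xb ρ := by
  intro x
  have hseg : Tendsto (fun t : ℝ => t • x + (1 - t) • xb) (𝓝[>] 0) (𝓝 xb) :=
    tendsto_nhdsWithin_of_tendsto_nhds (Continuous.tendsto' (by fun_prop) 0 xb (by simp))
  obtain ⟨t, hy, ht₀, ht₁⟩ := ((hseg.eventually h).and (Ioo_mem_nhdsGT one_pos)).exists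
  have hdist : t • x + (1 - t) • xb - xb = t • (x - xb) := by module
  rw [hdist, norm_smul, Real.norm_of_nonneg ht₀.le] at hy
  exact sharp_bound_of_sharp_bound_at_convex_combination hconv hr ht₀ ht₁.le hy

theorem steepestDescentRate_eq_sSup [NormedSpace ℝ X]
    (hconv : ERealConvex φ) (hr : φ xb = r) :
    steepestDescentRate φ xb =
      sSup ((fun ρ : ℝ => (ρ : EReal)) '' {ρ | IsSharpMinWith φ xb ρ}) := by
  refine le_antisymm ?_ (sSup_le ?_)
  · by_contra! hlt
    obtain ⟨ρ, hsup, hρ⟩ := EReal.exists_between_coe_real hlt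
    have hsharp : IsSharpMinWith φ xb ρ := by
      refine .of_eventually hconv hr ?_
      filter_upwards [eventually_nhdsWithin_iff.1 (eventually_lt_of_lt_liminf hρ)] with x hx
      obtain rfl | hne := eq_or_ne x xb
      · simp
      rw [hr, ← EReal.coe_le_sub_mul_inv_iff (norm_pos_iff.2 (sub_ne_zero.2 hne)), ← hr]
      exact (hx hne).le
    exact hsup.not_ge (le_sSup ⟨ρ, hsharp, rfl⟩)
  · rintro _ ⟨ρ, hρ, rfl⟩
    exact le_steepestDescentRate hr hρ

lemma closedBall_subset_convexSubdiff_iff [NormedSpace ℝ X] {ρ : ℝ} (hρ : 0 ≤ ρ) :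
    closedBall (0 : StrongDual ℝ X) ρ ⊆ convexSubdiff φ xb ↔ IsSharpMinWith φ xb ρ := by
  refine ⟨fun h x => ?_, fun h p hp x => ?_⟩
  · obtain rfl | hne := eq_or_ne x xb
    · simp
    obtain ⟨f, hf, hfx⟩ := exists_dual_vector ℝ (x - xb) (norm_ne_zero_iff.2 (sub_ne_zero.2 hne))
    have hρf : ρ • f ∈ closedBall (0 : StrongDual ℝ X) ρ := by
      rw [mem_closedBall_zero_iff, norm_smul, hf, mul_one, Real.norm_of_nonneg hρ]
    simpa [hfx] using h hρf x
  · have hpx : p (x - xb) ≤ ρ * ‖x - xb‖ :=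
      (le_abs_self _).trans (p.le_of_opNorm_le (mem_closedBall_zero_iff.1 hp) _)
    calc φ xb + ((p (x - xb) : ℝ) : EReal) ≤ φ xb + ((ρ * ‖x - xb‖ : ℝ) : EReal) := by
          gcongr
      _ ≤ φ x := h x

lemma zero_mem_interior_convexSubdiff_iff [NormedSpace ℝ X] :
    (0 : StrongDual ℝ X) ∈ interior (convexSubdiff φ xb) ↔ ∃ ρ > 0, IsSharpMinWith φ xb ρ := by
  rw [mem_interior_iff_mem_nhds, nhds_basis_closedBall.mem_iff]
  exact exists_congr fun ρ => and_congr_right fun hρ => closedBall_subset_convexSubdiff_iff hρ.le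

end SharpMin

/-- Let `φ` be a proper convex function (ℝ ∪ {+∞}-valued) on a normed
space and `xb ∈ dom φ`. Then `xb` is a global sharp minimizer of `φ` iff
`0 ∈ int ∂φ(xb)`; moreover, in this case the steepest descent rate of `φ` at `xb` equals
`sup{ρ > 0 : ρ·B* ⊆ ∂φ(xb)}`. -/
theorem sharp_min_iff_zero_mem_int_subdiff {X : Type*}
    [NormedAddCommGroup X] [NormedSpace ℝ X] (φ : X → EReal) (xb : X)
    (hconv : ∀ x₁ x₂ : X, ∀ t : ℝ, 0 ≤ t → t ≤ 1 →
      φ (t • x₁ + (1 - t) • x₂) ≤ ((t : ℝ) : EReal) * φ x₁ + ((1 - t : ℝ) : EReal) * φ x₂)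
    (hnbot : ∀ x, φ x ≠ ⊥) (hdom : φ xb ≠ ⊤) :
    ((∃ ζ : ℝ, 0 < ζ ∧ ∀ x : X, φ xb + ((ζ * ‖x - xb‖ : ℝ) : EReal) ≤ φ x) ↔
      (0 : StrongDual ℝ X) ∈ interior (convexSubdiff φ xb)) ∧
    ((0 : StrongDual ℝ X) ∈ interior (convexSubdiff φ xb) →
      steepestDescentRate φ xb =
        sSup ((fun ρ : ℝ => (ρ : EReal)) ''
          {ρ : ℝ | 0 < ρ ∧ ∀ p : StrongDual ℝ X, ‖p‖ ≤ ρ →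
            p ∈ convexSubdiff φ xb})) := by
  obtain ⟨r, hr⟩ : ∃ r : ℝ, φ xb = r := ⟨_, (EReal.coe_toReal hdom (hnbot xb)).symm⟩
  refine ⟨zero_mem_interior_convexSubdiff_iff.symm, fun h0 => ?_⟩
  have hball : {ρ : ℝ | 0 < ρ ∧ ∀ p : StrongDual ℝ X, ‖p‖ ≤ ρ → p ∈ convexSubdiff φ xb} =
      {ρ | 0 < ρ ∧ IsSharpMinWith φ xb ρ} := by
    ext ρ
    refine and_congr_right fun hρ => ?_
    rw [← closedBall_subset_convexSubdiff_iff hρ.le]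
    simp only [subset_def, mem_closedBall_zero_iff]
  rw [hball, steepestDescentRate_eq_sSup hconv hr]
  exact (EReal.sSup_coe_image_pos (zero_mem_interior_convexSubdiff_iff.1 h0)).symm
end

section
/- Let f : ℝⁿ → Y be a mapping into a normed space Y and x̄ ∈ ℝⁿ. If 0 belongs to the interior of the Fréchet subdifferential ∂̂(y*∘f)(x̄) for some y* in the unit sphere S* of the dual Y*, then f is strongly metrically subregular at x̄. -/
open Filter Topology Metric Set RealInnerProductSpace

/-- The Fréchet subdifferential of a real-valued function `ψ : ℝⁿ → ℝ` at `xb`: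
`{x* : liminf_{x→xb, x≠xb} (ψ x − ψ xb − ⟨x*, x − xb⟩)/‖x − xb‖ ≥ 0}`. -/
noncomputable def frechetSubdiffR {n : ℕ}
    (ψ : EuclideanSpace ℝ (Fin n) → ℝ) (xb : EuclideanSpace ℝ (Fin n)) :
    Set (EuclideanSpace ℝ (Fin n)) :=
  {p | (0 : EReal) ≤ Filter.liminf
    (fun x => (((ψ x - ψ xb - ⟪p, x - xb⟫) / ‖x - xb‖ : ℝ) : EReal)) (𝓝[≠] xb)}

section InnerProductSpace

variable {E : Type*} [NormedAddCommGroup E] [InnerProductSpace ℝ E]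

lemma exists_finite_unit_vectors_forall_inner_gt [ProperSpace E] :
    ∃ t : Set E, t.Finite ∧ (∀ u ∈ t, ‖u‖ = 1) ∧
      ∀ v : E, v ≠ 0 → ∃ u ∈ t, ‖v‖ < 2 * ⟪u, v⟫ := by
  have hcover : sphere (0 : E) 1 ⊆ ⋃ u ∈ sphere (0 : E) 1, {w | 1 / 2 < ⟪u, w⟫} := by
    intro w hw
    have hw1 : ‖w‖ = 1 := mem_sphere_zero_iff_norm.1 hw
    refine mem_iUnion₂.2 ⟨w, hw, ?_⟩
    show 1 / 2 < ⟪w, w⟫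
    rw [real_inner_self_eq_norm_sq, hw1]
    norm_num
  obtain ⟨t, hts, htfin, htcover⟩ := (isCompact_sphere (0 : E) 1).elim_finite_subcover_image
    (fun u _ => isOpen_lt continuous_const (continuous_const.inner continuous_id)) hcover
  refine ⟨t, htfin, fun u hu => mem_sphere_zero_iff_norm.1 (hts hu), fun v hv => ?_⟩
  have hnorm : 0 < ‖v‖ := norm_pos_iff.2 hv
  have hunit : ‖v‖⁻¹ • v ∈ sphere (0 : E) 1 := by
    rw [mem_sphere_zero_iff_norm, norm_smul, norm_inv, norm_norm, inv_mul_cancel₀ hnorm.ne']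
  obtain ⟨u, hut, hu⟩ := mem_iUnion₂.1 (htcover hunit)
  have hu' : 1 / 2 < ‖v‖⁻¹ * ⟪u, v⟫ := by rw [← real_inner_smul_right]; exact hu
  refine ⟨u, hut, ?_⟩
  rw [lt_inv_mul_iff₀ hnorm] at hu'
  linarith

lemma exists_pos_eventually_mul_norm_le_of_ball [ProperSpace E] {ψ : E → ℝ} {xb : E} {ε : ℝ}
    (hε : 0 < ε) (hψ : ∀ p : E, ‖p‖ < ε → ∀ η > 0,
      ∀ᶠ x in 𝓝[≠] xb, ⟪p, x - xb⟫ - η * ‖x - xb‖ ≤ ψ x - ψ xb) :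
    ∃ c > 0, ∀ᶠ x in 𝓝 xb, c * ‖x - xb‖ ≤ ψ x - ψ xb := by
  obtain ⟨t, htfin, htnorm, htcover⟩ := exists_finite_unit_vectors_forall_inner_gt (E := E)
  have hev : ∀ᶠ x in 𝓝[≠] xb, ∀ u ∈ t,
      ⟪(ε / 2) • u, x - xb⟫ - ε / 8 * ‖x - xb‖ ≤ ψ x - ψ xb := by
    refine (eventually_all_finite htfin).2 fun u hu => hψ _ ?_ _ (by positivity)
    rw [norm_smul, htnorm u hu, Real.norm_of_nonneg (by positivity)]
    linarith
  refine ⟨ε / 8, by positivity, ?_⟩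
  filter_upwards [eventually_nhdsWithin_iff.1 hev] with x hx
  rcases eq_or_ne x xb with rfl | hne
  · simp
  obtain ⟨u, hut, hu⟩ := htcover (x - xb) (sub_ne_zero.2 hne)
  have hxu := hx hne u hut
  rw [real_inner_smul_left] at hxu
  nlinarith

end InnerProductSpace

lemma eventually_le_of_mem_frechetSubdiffR {n : ℕ} {ψ : EuclideanSpace ℝ (Fin n) → ℝ}
    {xb p : EuclideanSpace ℝ (Fin n)} (hp : p ∈ frechetSubdiffR ψ xb) {η : ℝ} (hη : 0 < η) :
    ∀ᶠ x in 𝓝[≠] xb, ⟪p, x - xb⟫ - η * ‖x - xb‖ ≤ ψ x - ψ xb := by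
  have hlt : ((-η : ℝ) : EReal) <
      liminf (fun x => (((ψ x - ψ xb - ⟪p, x - xb⟫) / ‖x - xb‖ : ℝ) : EReal)) (𝓝[≠] xb) :=
    lt_of_lt_of_le (EReal.coe_lt_coe_iff.2 (neg_neg_of_pos hη)) hp
  filter_upwards [eventually_lt_of_lt_liminf hlt, self_mem_nhdsWithin] with x hx hne
  have hnorm : 0 < ‖x - xb‖ := norm_pos_iff.2 (sub_ne_zero.2 hne)
  rw [EReal.coe_lt_coe_iff, lt_div_iff₀ hnorm] at hx
  linarith

lemma isStronglyMetricallySubregularMap_of_eventually_le {X Y : Type*}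
    [NormedAddCommGroup X] [NormedAddCommGroup Y] {f : X → Y} {xb : X} {c : ℝ} (hc : 0 < c)
    (hf : ∀ᶠ x in 𝓝 xb, c * ‖x - xb‖ ≤ ‖f x - f xb‖) :
    IsStronglyMetricallySubregularMap f xb := by
  obtain ⟨r, hr, hball⟩ := Metric.eventually_nhds_iff.1 hf
  refine ⟨c⁻¹, inv_nonneg.2 hc.le, r / 2, half_pos hr, fun x hx => ?_⟩
  have hx' : dist x xb < r := (mem_closedBall.1 hx).trans_lt (half_lt_self hr)
  rw [le_inv_mul_iff₀ hc]
  exact hball hx'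

/-- If `0` belongs to the interior of the Fréchet subdifferential
`∂̂(y*∘f)(xb)` for some `y*` in the unit sphere of the dual of `Y`, then
`f : ℝⁿ → Y` is strongly metrically subregular at `xb`. -/
theorem strong_subreg_of_frechet_scalarization {n : ℕ} {Y : Type*}
    [NormedAddCommGroup Y] [NormedSpace ℝ Y]
    (f : EuclideanSpace ℝ (Fin n) → Y) (xb : EuclideanSpace ℝ (Fin n))
    (hq : ∃ q : StrongDual ℝ Y, ‖q‖ = 1 ∧
      (0 : EuclideanSpace ℝ (Fin n)) ∈
        interior (frechetSubdiffR (fun x => q (f x)) xb)) :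
    IsStronglyMetricallySubregularMap f xb := by
  obtain ⟨q, hq1, hq0⟩ := hq
  obtain ⟨ε, hε, hball⟩ := Metric.isOpen_iff.1 isOpen_interior _ hq0
  obtain ⟨c, hc, hgrowth⟩ := exists_pos_eventually_mul_norm_le_of_ball hε fun p hp _ hη =>
    eventually_le_of_mem_frechetSubdiffR (interior_subset (hball (mem_ball_zero_iff.2 hp))) hη
  refine isStronglyMetricallySubregularMap_of_eventually_le hc ?_
  filter_upwards [hgrowth] with x hx
  calc c * ‖x - xb‖ ≤ q (f x) - q (f xb) := hx
    _ = q (f x - f xb) := (map_sub q _ _).symm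
    _ ≤ ‖q‖ * ‖f x - f xb‖ := (le_abs_self _).trans (q.le_opNorm _)
    _ = ‖f x - f xb‖ := by rw [hq1, one_mul]
end

section
/- Consider the generalized equation 0 ∈ f(p, x) + T(x) with f : P × X → Y (P a metric space, X, Y normed spaces), T : X ⇉ Y, solution mapping S(p) = {x ∈ X : 0 ∈ f(p, x) + T(x)}, and let x̄ ∈ S(p̄). Suppose: (i) f(·, x̄) is calm at p̄ with modulus clm f(·, x̄)(p̄); (ii) for some ε > 0, f admits a positively homogeneous Φ : X ⇉ Y as partial outer ε-prederivative at (p̄, x̄) uniformly with respect to p; (iii) the set-valued mapping x ⇉ f(p̄, x̄) + Φ(x − x̄) + T(x) is strongly metrically subregular at (x̄, 0), with modulus subreg(Φ+T)(x̄, 0) satisfying ε · subreg(Φ+T)(x̄, 0) < 1. Then S has the isolated calmness property at (p̄, x̄) and clm S(p̄, x̄) ≤ clm f(·, x̄)(p̄) · subreg(Φ+T)(x̄, 0) / (1 − ε · subreg(Φ+T)(x̄, 0)). -/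
open Filter Topology Metric Set ENNReal Pointwise

/-- Strong metric subregularity of a set-valued map at `(xb, yb)` (here `X` normed,
`Y` normed). -/
def IsStronglyMetricallySubregular {X Y : Type*} [MetricSpace X] [MetricSpace Y]
    (F : X → Set Y) (xb : X) (yb : Y) : Prop :=
  ∃ κ : ℝ, 0 ≤ κ ∧ ∃ r : ℝ, 0 < r ∧ ∀ x ∈ Metric.closedBall xb r,
    ENNReal.ofReal (dist x xb) ≤ ENNReal.ofReal κ * EMetric.infEdist yb (F x)

/-- The modulus of subregularity of a set-valued map. -/
noncomputable def subregMod {X Y : Type*} [MetricSpace X] [MetricSpace Y]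
    (F : X → Set Y) (xb : X) (yb : Y) : ℝ :=
  sInf {κ : ℝ | 0 ≤ κ ∧ ∃ r : ℝ, 0 < r ∧ ∀ x ∈ Metric.closedBall xb r,
    ENNReal.ofReal (dist x xb) ≤ ENNReal.ofReal κ * EMetric.infEdist yb (F x)}

/-- Calmness of a single-valued map from a metric space to a normed space at `pb`. -/
def IsCalmMap {P Y : Type*} [MetricSpace P] [NormedAddCommGroup Y]
    (g : P → Y) (pb : P) : Prop :=
  ∃ κ : ℝ, 0 ≤ κ ∧ ∃ r : ℝ, 0 < r ∧ ∀ p ∈ Metric.closedBall pb r,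
    ‖g p - g pb‖ ≤ κ * dist p pb

/-- Calmness modulus of a single-valued map from a metric space to a normed space. -/
noncomputable def clmModMap {P Y : Type*} [MetricSpace P] [NormedAddCommGroup Y]
    (g : P → Y) (pb : P) : ℝ :=
  sInf {κ : ℝ | 0 ≤ κ ∧ ∃ r : ℝ, 0 < r ∧ ∀ p ∈ Metric.closedBall pb r,
    ‖g p - g pb‖ ≤ κ * dist p pb}

/-- Calmness of a set-valued map `G : P ⇉ X` at `(pb, xb) ∈ graph G`. -/
def IsCalmSV {P X : Type*} [MetricSpace P] [MetricSpace X]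
    (G : P → Set X) (pb : P) (xb : X) : Prop :=
  ∃ κ : ℝ, 0 ≤ κ ∧ ∃ r : ℝ, 0 < r ∧ ∀ p ∈ Metric.closedBall pb r,
    ∀ x ∈ G p ∩ Metric.closedBall xb r,
      EMetric.infEdist x (G pb) ≤ ENNReal.ofReal (κ * dist p pb)

/-- The calmness modulus of a set-valued map `G : P ⇉ X` at `(pb, xb)`. -/
noncomputable def clmModSV {P X : Type*} [MetricSpace P] [MetricSpace X]
    (G : P → Set X) (pb : P) (xb : X) : ℝ :=
  sInf {κ : ℝ | 0 ≤ κ ∧ ∃ r : ℝ, 0 < r ∧ ∀ p ∈ Metric.closedBall pb r,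
    ∀ x ∈ G p ∩ Metric.closedBall xb r,
      EMetric.infEdist x (G pb) ≤ ENNReal.ofReal (κ * dist p pb)}

/-- Isolated calmness of the solution mapping
`S(p) = {x : 0 ∈ f(p, x) + T(x)}` of a parameterized generalized equation, under
calmness of `f(·, xb)` at `pb`, existence of a partial outer `ε`-prederivative `Φ` of
`f` at `(pb, xb)` uniform in `p`, and strong metric subregularity of the approximate
mapping `x ⇉ f(pb, xb) + Φ(x − xb) + T(x)` at `(xb, 0)` with
`ε · subreg(Φ+T)(xb, 0) < 1`; with the corresponding modulus estimate. -/
theorem isolated_calmness_of_solution_mapping {P X Y : Type*} [MetricSpace P]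
    [NormedAddCommGroup X] [NormedSpace ℝ X] [NormedAddCommGroup Y] [NormedSpace ℝ Y]
    (f : P × X → Y) (T : X → Set Y) (pb : P) (xb : X)
    (S : P → Set X) (hS : S = fun p => {x | (0 : Y) ∈ ({f (p, x)} : Set Y) + T x})
    (hsol : xb ∈ S pb)
    -- (i) calmness of the base in the parameter
    (hcalm : IsCalmMap (fun p => f (p, xb)) pb)
    -- (ii) partial outer ε-prederivative, uniformly in p
    (Φ : X → Set Y) (hΦ0 : (0 : Y) ∈ Φ 0)
    (hΦh : ∀ t : ℝ, 0 < t → ∀ x : X, Φ (t • x) = t • Φ x)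
    (ε : ℝ) (hε : 0 < ε)
    (hpre : ∃ δ : ℝ, 0 < δ ∧ ∃ ζ : ℝ, 0 < ζ ∧ ∃ r : P × X → ℝ,
      (∀ p ∈ Metric.closedBall pb ζ, ∀ v ∈ Metric.closedBall (0 : X) δ,
        r (p, v) ∈ Set.Icc 0 ε) ∧
      ∀ p ∈ Metric.closedBall pb ζ, ∀ x ∈ Metric.closedBall xb δ,
        f (p, x) - f (p, xb) ∈
          Φ (x - xb) + Metric.closedBall (0 : Y) (r (p, x - xb) * ‖x - xb‖))
    -- (iii) strong metric subregularity of the approximate generalized equation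
    (G : X → Set Y) (hG : G = fun x => ({f (pb, xb)} : Set Y) + Φ (x - xb) + T x)
    (hsub : IsStronglyMetricallySubregular G xb (0 : Y))
    (hlt : ε * subregMod G xb (0 : Y) < 1) :
    (IsCalmSV S pb xb ∧ ∃ ρ : ℝ, 0 < ρ ∧ S pb ∩ Metric.closedBall xb ρ ⊆ {xb}) ∧
    clmModSV S pb xb ≤
      clmModMap (fun p => f (p, xb)) pb * subregMod G xb (0 : Y) /
        (1 - ε * subregMod G xb (0 : Y)) := by
  classical
  subst hS hG
  -- the three defining sets
  set KS : Set ℝ := {κ : ℝ | 0 ≤ κ ∧ ∃ r : ℝ, 0 < r ∧ ∀ x ∈ Metric.closedBall xb r,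
    ENNReal.ofReal (dist x xb) ≤ ENNReal.ofReal κ *
      EMetric.infEdist (0 : Y) (({f (pb, xb)} : Set Y) + Φ (x - xb) + T x)} with hKS
  set LS : Set ℝ := {κ : ℝ | 0 ≤ κ ∧ ∃ r : ℝ, 0 < r ∧ ∀ p ∈ Metric.closedBall pb r,
    ‖f (p, xb) - f (pb, xb)‖ ≤ κ * dist p pb} with hLS
  set MS : Set ℝ := {κ : ℝ | 0 ≤ κ ∧ ∃ r : ℝ, 0 < r ∧ ∀ p ∈ Metric.closedBall pb r,
    ∀ x ∈ (fun p => {x | (0 : Y) ∈ ({f (p, x)} : Set Y) + T x}) p ∩ Metric.closedBall xb r,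
      EMetric.infEdist x ((fun p => {x | (0 : Y) ∈ ({f (p, x)} : Set Y) + T x}) pb)
        ≤ ENNReal.ofReal (κ * dist p pb)} with hMS
  have hκeq : subregMod (fun x => ({f (pb, xb)} : Set Y) + Φ (x - xb) + T x) xb (0 : Y)
      = sInf KS := rfl
  have hlameq : clmModMap (fun p => f (p, xb)) pb = sInf LS := rfl
  have hMeq : clmModSV (fun p => {x | (0 : Y) ∈ ({f (p, x)} : Set Y) + T x}) pb xb
      = sInf MS := rfl
  obtain ⟨δ, hδ, ζ, hζ, rr, hrr, hfr⟩ := hpre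
  -- the key quantitative estimate
  have key : ∀ κ₁ ∈ KS, ε * κ₁ < 1 → ∀ lam1 ∈ LS,
      ∃ r : ℝ, 0 < r ∧ ∀ p ∈ Metric.closedBall pb r,
        ∀ x ∈ {x | (0 : Y) ∈ ({f (p, x)} : Set Y) + T x} ∩ Metric.closedBall xb r,
          ‖x - xb‖ ≤ lam1 * κ₁ / (1 - ε * κ₁) * dist p pb := by
    rintro κ₁ ⟨hκ₁0, r₁, hr₁, hsubr⟩ hεκ lam1 ⟨hlam10, r₂, hr₂, hcal⟩
    refine ⟨min (min r₁ δ) (min r₂ ζ), by positivity, ?_⟩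
    intro p hp x hx
    obtain ⟨hxS, hxB⟩ := hx
    rw [Metric.mem_closedBall] at hp hxB
    have hd1 : dist p pb ≤ ζ := hp.trans ((min_le_right _ _).trans (min_le_right _ _))
    have hd2 : dist p pb ≤ r₂ := hp.trans ((min_le_right _ _).trans (min_le_left _ _))
    have hd3 : dist x xb ≤ r₁ := hxB.trans ((min_le_left _ _).trans (min_le_left _ _))
    have hd4 : dist x xb ≤ δ := hxB.trans ((min_le_left _ _).trans (min_le_right _ _))
    -- the element of T x
    rw [Set.mem_setOf_eq, Set.mem_add] at hxS
    obtain ⟨a, ha, t, ht, hat⟩ := hxS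
    rw [Set.mem_singleton_iff] at ha
    subst ha
    -- the prederivative estimate
    have hmem := hfr p (Metric.mem_closedBall.2 hd1) x (Metric.mem_closedBall.2 hd4)
    rw [Set.mem_add] at hmem
    obtain ⟨w, hw, e, he, hwe⟩ := hmem
    rw [Metric.mem_closedBall, dist_zero_right] at he
    have hvδ : (x - xb) ∈ Metric.closedBall (0 : X) δ := by
      rw [Metric.mem_closedBall, dist_zero_right, ← dist_eq_norm]; exact hd4
    have hrε := hrr p (Metric.mem_closedBall.2 hd1) (x - xb) hvδ
    have heε : ‖e‖ ≤ ε * ‖x - xb‖ :=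
      he.trans (mul_le_mul_of_nonneg_right hrε.2 (norm_nonneg _))
    -- the element of the approximate mapping
    have hyG : f (pb, xb) + w + t ∈ ({f (pb, xb)} : Set Y) + Φ (x - xb) + T x :=
      Set.add_mem_add (Set.add_mem_add rfl hw) ht
    have h1 : EMetric.infEdist (0 : Y) (({f (pb, xb)} : Set Y) + Φ (x - xb) + T x)
        ≤ ENNReal.ofReal ‖f (pb, xb) + w + t‖ := by
      calc EMetric.infEdist (0 : Y) (({f (pb, xb)} : Set Y) + Φ (x - xb) + T x)
          ≤ edist (0 : Y) (f (pb, xb) + w + t) := EMetric.infEdist_le_edist_of_mem hyG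
        _ = ENNReal.ofReal ‖f (pb, xb) + w + t‖ := by rw [edist_dist, dist_zero_left]
    have h2 : ENNReal.ofReal (dist x xb)
        ≤ ENNReal.ofReal (κ₁ * ‖f (pb, xb) + w + t‖) := by
      calc ENNReal.ofReal (dist x xb)
          ≤ ENNReal.ofReal κ₁ *
            EMetric.infEdist (0 : Y) (({f (pb, xb)} : Set Y) + Φ (x - xb) + T x) :=
            hsubr x (Metric.mem_closedBall.2 hd3)
        _ ≤ ENNReal.ofReal κ₁ * ENNReal.ofReal ‖f (pb, xb) + w + t‖ :=
            mul_le_mul_right h1 _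
        _ = ENNReal.ofReal (κ₁ * ‖f (pb, xb) + w + t‖) := (ENNReal.ofReal_mul hκ₁0).symm
    have h3 : dist x xb ≤ κ₁ * ‖f (pb, xb) + w + t‖ :=
      (ENNReal.ofReal_le_ofReal_iff (mul_nonneg hκ₁0 (norm_nonneg _))).1 h2
    -- rewrite y
    have ht' : t = -f (p, x) := eq_neg_of_add_eq_zero_right hat
    have hw' : w = f (p, x) - f (p, xb) - e := eq_sub_of_add_eq hwe
    have hy : f (pb, xb) + w + t = f (pb, xb) - f (p, xb) - e := by
      rw [ht', hw']; abel
    have hny : ‖f (pb, xb) + w + t‖ ≤ lam1 * dist p pb + ε * ‖x - xb‖ := by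
      rw [hy]
      calc ‖f (pb, xb) - f (p, xb) - e‖ ≤ ‖f (pb, xb) - f (p, xb)‖ + ‖e‖ :=
            norm_sub_le _ _
        _ ≤ lam1 * dist p pb + ε * ‖x - xb‖ := by
            refine add_le_add ?_ heε
            rw [norm_sub_rev]
            exact hcal p (Metric.mem_closedBall.2 hd2)
    have hfinal : ‖x - xb‖ ≤ κ₁ * (lam1 * dist p pb + ε * ‖x - xb‖) := by
      have := h3.trans (mul_le_mul_of_nonneg_left hny hκ₁0)
      rwa [dist_eq_norm] at this
    rw [div_mul_eq_mul_div, le_div_iff₀ (by linarith)]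
    nlinarith [dist_nonneg (x := p) (y := pb), norm_nonneg (x - xb)]
  -- basic facts about the sets
  have hKbdd : BddBelow KS := ⟨0, fun x hx => hx.1⟩
  have hKne : KS.Nonempty := hsub
  have hLne : LS.Nonempty := hcalm
  have hκ0 : 0 ≤ sInf KS := Real.sInf_nonneg fun x hx => hx.1
  have hlam0 : 0 ≤ sInf LS := Real.sInf_nonneg fun x hx => hx.1
  rw [hκeq] at hlt
  -- membership in the SV-calmness set
  have mkSV : ∀ κ₁ ∈ KS, ε * κ₁ < 1 → ∀ lam1 ∈ LS, lam1 * κ₁ / (1 - ε * κ₁) ∈ MS := by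
    intro κ₁ hκ₁ hεκ lam1 hlam1
    obtain ⟨r, hr, hb⟩ := key κ₁ hκ₁ hεκ lam1 hlam1
    refine ⟨div_nonneg (mul_nonneg hlam1.1 hκ₁.1) (by linarith), r, hr, ?_⟩
    intro p hp x hx
    calc EMetric.infEdist x {x | (0 : Y) ∈ ({f (pb, x)} : Set Y) + T x}
        ≤ edist x xb := EMetric.infEdist_le_edist_of_mem hsol
      _ = ENNReal.ofReal (dist x xb) := edist_dist x xb
      _ ≤ ENNReal.ofReal (lam1 * κ₁ / (1 - ε * κ₁) * dist p pb) :=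
          ENNReal.ofReal_le_ofReal (by rw [dist_eq_norm]; exact hb p hp x hx)
  -- pick one admissible κ₁ and lam1
  have hκlt : sInf KS < 1 / ε := by rw [lt_div_iff₀ hε]; linarith
  obtain ⟨κ₁, hκ₁KS, hκ₁lt⟩ := (csInf_lt_iff hKbdd hKne).1 hκlt
  have hεκ₁ : ε * κ₁ < 1 := by
    have := (lt_div_iff₀ hε).1 hκ₁lt; linarith
  obtain ⟨lam1, hlam1LS⟩ := id hLne
  have hmem := mkSV κ₁ hκ₁KS hεκ₁ lam1 hlam1LS
  have hMne : MS.Nonempty := ⟨_, hmem⟩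
  have hMbdd : BddBelow MS := ⟨0, fun x hx => hx.1⟩
  have hM0 : 0 ≤ sInf MS := Real.sInf_nonneg fun x hx => hx.1
  constructor
  · constructor
    · exact ⟨_, hmem⟩
    · -- isolatedness
      obtain ⟨r, hr, hb⟩ := key κ₁ hκ₁KS hεκ₁ lam1 hlam1LS
      refine ⟨r, hr, ?_⟩
      intro x hx
      have h := hb pb (Metric.mem_closedBall_self hr.le) x hx
      rw [dist_self, mul_zero] at h
      have : x - xb = 0 := norm_le_zero_iff.1 h
      simpa [sub_eq_zero] using this
  · -- the modulus estimate
    rw [hlameq, hκeq, hMeq]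
    set M := sInf MS with hM
    set lam := sInf LS with hlam
    set kap := sInf KS with hkap
    -- Step 1: for each admissible κ₁, bound with lam
    have stepA : ∀ κ₁ ∈ KS, ε * κ₁ < 1 → M * (1 - ε * κ₁) ≤ κ₁ * lam := by
      intro κ₁ hκ₁ hεκ
      have hC : (0 : ℝ) ≤ κ₁ / (1 - ε * κ₁) :=
        div_nonneg hκ₁.1 (by linarith)
      have hCl : M ≤ κ₁ / (1 - ε * κ₁) * lam := by
        have h : M ≤ sInf ((κ₁ / (1 - ε * κ₁)) • LS) := by
          refine le_csInf (Set.smul_set_nonempty.2 hLne) ?_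
          rintro b ⟨lam1p, hlam1p, rfl⟩
          show M ≤ κ₁ / (1 - ε * κ₁) * lam1p
          have := csInf_le hMbdd (mkSV κ₁ hκ₁ hεκ lam1p hlam1p)
          calc M ≤ lam1p * κ₁ / (1 - ε * κ₁) := this
            _ = κ₁ / (1 - ε * κ₁) * lam1p := by ring
        rwa [Real.sInf_smul_of_nonneg hC, smul_eq_mul, ← hlam] at h
      rw [div_mul_eq_mul_div, le_div_iff₀ (by linarith)] at hCl
      linarith [hCl]
    -- Step 2: pass to the infimum over κ₁
    have stepB : ∀ d > (0 : ℝ), M ≤ (lam + M * ε) * (kap + d) := by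
      intro d hd
      have h1 : kap < min (kap + d) (1 / ε) := by
        rw [lt_min_iff]
        constructor
        · linarith
        · rw [lt_div_iff₀ hε]; linarith
      obtain ⟨κ₁', hκ₁'KS, hκ₁'lt⟩ := (csInf_lt_iff hKbdd hKne).1 h1
      rw [lt_min_iff] at hκ₁'lt
      have hεκ' : ε * κ₁' < 1 := by
        have := (lt_div_iff₀ hε).1 hκ₁'lt.2; linarith
      have hA := stepA κ₁' hκ₁'KS hεκ'
      have hκ₁'0 : 0 ≤ κ₁' := hκ₁'KS.1
      have hlamM : 0 ≤ lam + M * ε := by positivity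
      nlinarith [hκ₁'lt.1, hA, hM0, hκ0]
    have stepC : M ≤ (lam + M * ε) * kap := by
      refine le_of_forall_pos_le_add ?_
      intro η hη
      have hlamM : 0 ≤ lam + M * ε := by positivity
      have hB := stepB (η / (lam + M * ε + 1)) (by positivity)
      have hbd : (lam + M * ε) * (η / (lam + M * ε + 1)) ≤ η := by
        rw [mul_comm, div_mul_eq_mul_div, div_le_iff₀ (by positivity)]
        nlinarith
      nlinarith
    have hpos : 0 < 1 - ε * kap := by linarith
    rw [le_div_iff₀ hpos]
    nlinarith [stepC]
end
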